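/- arXiv:2505.00778 — 8 statements merged into one kernel-verified Lean document; each statement's English description precedes it below -/
import Mathlib

section
/- Let {r_j (mod m_j) : 1 ≤ j ≤ τ} be a covering system, let p_1, …, p_τ be pairwise distinct odd primes such that p_j divides 2^{m_j} − 1 for each j, and let k be an odd positive integer with k·2^{r_j} ≡ −1 (mod p_j) for each j. Then for every integer b ≥ 2, there exist infinitely many positive integers t such that the b-repinteger k_b^{(t)} is a Sierpiński number. -/
/-- A number is composite if it is a product of two integers greater than 1. -/
def IsComposite (n : ℕ) : Prop := ∃ a b : ℕ, 1 < a ∧ 1 < b ∧ n = a * b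

/-- A Sierpiński number is an odd positive integer `k` such that `k·2^n + 1` is composite
for every positive integer `n`. -/
def IsSierpinski (k : ℕ) : Prop := 0 < k ∧ Odd k ∧ ∀ n : ℕ, 0 < n → IsComposite (k * 2 ^ n + 1)

/-- The `b`-repinteger `k_b^{(t)} = k·(b^{ℓt} − 1)/(b^ℓ − 1)`, where
`ℓ = ⌊log_b(k)⌋ + 1` is the number of base-`b` digits of `k`. -/
def repinteger (b k t : ℕ) : ℕ :=
  k * ((b ^ ((Nat.log b k + 1) * t) - 1) / (b ^ (Nat.log b k + 1) - 1))

/-- The repinteger is `k` times a geometric sum. -/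
lemma repinteger_eq (b k t : ℕ) (hb : 2 ≤ b) :
    repinteger b k t = k * ∑ i ∈ Finset.range t, (b ^ (Nat.log b k + 1)) ^ i := by
  set B := b ^ (Nat.log b k + 1) with hBdef
  have hB : 2 ≤ B := le_trans hb (Nat.le_self_pow (by omega) b)
  have h1 : 1 ≤ B := by omega
  have h2 : 1 ≤ B ^ t := Nat.one_le_pow _ _ (by omega)
  have key : (B ^ t - 1) / (B - 1) = ∑ i ∈ Finset.range t, B ^ i := by
    apply Nat.div_eq_of_eq_mul_left (by omega : 0 < B - 1)
    have := geom_sum_mul (B : ℤ) t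
    zify [h1, h2]
    linarith [this]
  rw [repinteger, ← hBdef, pow_mul, key]

/-- Geometric sum of length `t ≡ 1 (mod q(q-1))` is `1` in `ZMod q` for prime `q`. -/
lemma aux_geom (q : ℕ) (hq : q.Prime) (x : ZMod q) (t : ℕ) (ht1 : 1 ≤ t)
    (ht : q * (q - 1) ∣ t - 1) : ∑ i ∈ Finset.range t, x ^ i = 1 := by
  haveI := Fact.mk hq
  obtain ⟨e, he⟩ := ht
  have htt : t = 1 + q * ((q - 1) * e) := by
    have h2 : 2 ≤ q := hq.two_le
    have : q * (q - 1) * e = q * ((q - 1) * e) := by ring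
    omega
  by_cases hx1 : x = 1
  · subst hx1
    simp only [one_pow, Finset.sum_const, Finset.card_range, smul_eq_mul, mul_one]
    rw [htt]
    push_cast
    simp [ZMod.natCast_self]
  · rw [geom_sum_eq hx1]
    have hxt : x ^ t = x := by
      by_cases hx0 : x = 0
      · rw [hx0, zero_pow (by omega)]
      · rw [htt, pow_add, pow_one, show q * ((q - 1) * e) = (q - 1) * (q * e) by ring,
          pow_mul, ZMod.pow_card_sub_one_eq_one hx0, one_pow, mul_one]
    rw [hxt, div_self (sub_ne_zero.mpr hx1)]

/-- Let `{r_j (mod m_j) : 1 ≤ j ≤ τ}` be a covering system, let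
`p_1, …, p_τ` be pairwise distinct odd primes such that `p_j ∣ 2^{m_j} − 1` for each `j`,
and let `k` be an odd positive integer with `k·2^{r_j} ≡ −1 (mod p_j)` for each `j`.
Then for every integer `b ≥ 2`, there exist infinitely many positive integers `t` such
that the `b`-repinteger `k_b^{(t)}` is a Sierpiński number. -/
theorem stmt_2 (τ : ℕ) (r m p : Fin τ → ℕ)
    (hm : ∀ j, 0 < m j)
    (hcov : ∀ n : ℤ, ∃ j, n ≡ (r j : ℤ) [ZMOD (m j : ℤ)])
    (hp : ∀ j, (p j).Prime ∧ Odd (p j))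
    (hdist : Function.Injective p)
    (hdvd : ∀ j, p j ∣ 2 ^ (m j) - 1)
    (k : ℕ) (hk : 0 < k) (hodd : Odd k)
    (hcong : ∀ j, p j ∣ k * 2 ^ (r j) + 1) :
    ∀ b : ℕ, 2 ≤ b → {t : ℕ | 0 < t ∧ IsSierpinski (repinteger b k t)}.Infinite := by
  intro b hb
  set B := b ^ (Nat.log b k + 1) with hBdef
  set M := 2 * ∏ j : Fin τ, (p j * (p j - 1)) with hMdef
  set P := ∑ j : Fin τ, p j with hPdef
  have hMpos : 0 < M := by
    refine Nat.mul_pos (by omega) (Finset.prod_pos fun j _ => ?_)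
    have h2 := (hp j).1.two_le
    have h3 : p j ≠ 2 := by
      intro h
      have := (hp j).2
      rw [h] at this
      exact (Nat.not_odd_iff_even.mpr (by decide)) this
    have : 3 ≤ p j := by omega
    exact Nat.mul_pos (by omega) (by omega)
  have hPj : ∀ j, p j ≤ P := fun j =>
    Finset.single_le_sum (fun i _ => Nat.zero_le _) (Finset.mem_univ j)
  apply Set.infinite_of_injective_forall_mem
    (f := fun c : ℕ => 1 + (c + P) * M)
  · intro c1 c2 h
    simp only [add_left_cancel_iff] at h
    have := Nat.eq_of_mul_eq_mul_right hMpos h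
    omega
  · intro c
    set t := 1 + (c + P) * M with htdef
    have ht1 : 1 ≤ t := by omega
    have htM : M ∣ t - 1 := ⟨c + P, by rw [htdef, Nat.mul_comm M (c + P)]; omega⟩
    have htP : P ≤ t := by
      have h1 : P * 1 ≤ (c + P) * M := Nat.mul_le_mul (by omega) hMpos
      omega
    refine ⟨by omega, ?_⟩
    rw [repinteger_eq b k t hb, ← hBdef]
    set G := ∑ i ∈ Finset.range t, B ^ i with hGdef
    have hGt : t ≤ G := by
      calc t = ∑ _i ∈ Finset.range t, 1 := by simp
        _ ≤ G := Finset.sum_le_sum fun i _ => Nat.one_le_pow _ _ (by positivity)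
    have hGcast : ∀ q : ℕ, ((G : ℕ) : ZMod q) = ∑ i ∈ Finset.range t, (B : ZMod q) ^ i := by
      intro q; rw [hGdef]; push_cast; rfl
    -- G is odd
    have hGodd : Odd G := by
      have h2 : (G : ZMod 2) = 1 := by
        rw [hGcast 2]
        refine aux_geom 2 Nat.prime_two _ t ht1 ?_
        norm_num
        exact dvd_trans (dvd_mul_right 2 _) htM
      have hdd : ¬ (2 ∣ G) := by
        rw [← ZMod.natCast_eq_zero_iff, h2]
        exact one_ne_zero
      exact Nat.odd_iff.mpr (by omega)
    -- G ≡ 1 mod each p j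
    have hGp : ∀ j, ((G : ℕ) : ZMod (p j)) = 1 := by
      intro j
      rw [hGcast (p j)]
      refine aux_geom (p j) (hp j).1 _ t ht1 (dvd_trans ?_ htM)
      refine dvd_trans (Finset.dvd_prod_of_mem (fun i => p i * (p i - 1))
        (Finset.mem_univ j)) ?_
      exact Dvd.intro_left 2 rfl
    refine ⟨Nat.mul_pos hk (lt_of_lt_of_le (by omega) hGt), hodd.mul hGodd, ?_⟩
    intro n hn
    -- find covering congruence
    obtain ⟨j, hj⟩ := hcov (n : ℤ)
    set q := p j with hqdef
    haveI := Fact.mk (hp j).1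
    have hq2 : 2 ≤ q := (hp j).1.two_le
    -- 2^(m j) ≡ 1 mod q
    have h2m : (2 : ZMod q) ^ (m j) = 1 := by
      have h1 : 1 ≤ 2 ^ (m j) := Nat.one_le_pow _ _ (by omega)
      have := (ZMod.natCast_eq_zero_iff (2 ^ (m j) - 1) q).mpr (hdvd j)
      push_cast [Nat.cast_sub h1] at this
      linear_combination this
    -- n ≡ r j mod m j as naturals
    have hmodnat : n % m j = r j % m j := by
      have : (n : ℤ) % (m j : ℤ) = (r j : ℤ) % (m j : ℤ) := hj
      exact_mod_cast this
    -- 2^n = 2^(r j) in ZMod q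
    have hpow : ∀ s : ℕ, (2 : ZMod q) ^ s = (2 : ZMod q) ^ (s % m j) := by
      intro s
      conv_lhs => rw [← Nat.div_add_mod s (m j)]
      rw [pow_add, pow_mul, h2m, one_pow, one_mul]
    have h2nr : (2 : ZMod q) ^ n = (2 : ZMod q) ^ (r j) := by
      rw [hpow n, hpow (r j), hmodnat]
    -- q divides N
    set N := k * G * 2 ^ n + 1 with hNdef
    have hqN : q ∣ N := by
      rw [← ZMod.natCast_eq_zero_iff]
      have h0 : ((k * 2 ^ (r j) + 1 : ℕ) : ZMod q) = 0 :=
        (ZMod.natCast_eq_zero_iff _ q).mpr (hcong j)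
      rw [hNdef]
      push_cast at h0 ⊢
      rw [hGp j, mul_one, h2nr]
      exact h0
    -- size bound
    have hKq : q ≤ k * G := by
      calc q ≤ P := hPj j
        _ ≤ t := htP
        _ ≤ G := hGt
        _ = 1 * G := (one_mul G).symm
        _ ≤ k * G := Nat.mul_le_mul hk (le_refl G)
    have h2n : 2 ≤ 2 ^ n := by
      calc (2:ℕ) = 2 ^ 1 := rfl
        _ ≤ 2 ^ n := Nat.pow_le_pow_right (by omega) hn
    have hN2q : 2 * q + 1 ≤ N := by
      have : q * 2 ≤ (k * G) * 2 ^ n := Nat.mul_le_mul hKq h2n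
      omega
    obtain ⟨w, hw⟩ := hqN
    have hw2 : 2 ≤ w := by
      by_contra hcon
      push_neg at hcon
      interval_cases w <;> omega
    exact ⟨q, w, by omega, hw2, hw⟩
end

section
/- For every positive integer t with t ≡ 25 (mod 56), the integer 18107·(2^{15t} − 1)/(2^{15} − 1) (the 2-repinteger consisting of the 15-bit binary string of 18107 repeated t times) is a Sierpiński number. -/
/-!
Let `Q_t = (2^{15t} - 1)/(2^{15} - 1) = ∑_{i<t} 2^{15i}` and `M = 2^24 - 1 = 3²·5·7·13·17·241`.
Modulo `M` the geometric sum `∑_{i<56} 2^{15i}` vanishes, so `Q_t ≡ Q_25 (mod M)` whenever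
`t ≡ 25 (mod 56)`. Since `2^24 ≡ 1 (mod M)`, the residue of `18107·Q_t·2^n + 1` modulo `M` only
depends on `n mod 24`, and for each of the 24 residues one of the primes `3, 5, 7, 13, 17, 241`
divides `18107·Q_25·2^n + 1`. These primes are smaller than `18107·Q_t·2^n + 1`, which is
therefore composite.
-/

open Finset

section GeomSum

variable {R : Type*} [Semiring R] {x : R} {P : ℕ}

theorem geom_sum_add_period (h : ∑ i ∈ range P, x ^ i = 0) (a : ℕ) :
    ∑ i ∈ range (a + P), x ^ i = ∑ i ∈ range a, x ^ i := by
  simp_rw [sum_range_add, pow_add, ← mul_sum, h, mul_zero, add_zero]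

theorem geom_sum_eq_geom_sum_mod (h : ∑ i ∈ range P, x ^ i = 0) (n : ℕ) :
    ∑ i ∈ range n, x ^ i = ∑ i ∈ range (n % P), x ^ i := by
  conv_lhs => rw [← Nat.mod_add_div n P]
  induction n / P with
  | zero => simp
  | succ q ih => rw [mul_add_one, ← add_assoc, geom_sum_add_period h, ih]

end GeomSum

theorem Nat.odd_geom_sum_of_even {x : ℕ} (hx : Even x) {t : ℕ} (ht : 0 < t) :
    Odd (∑ i ∈ range t, x ^ i) := by
  obtain ⟨s, rfl⟩ := Nat.exists_eq_succ_of_ne_zero ht.ne'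
  rw [sum_range_succ', pow_zero]
  simp_rw [pow_succ, ← sum_mul]
  exact (hx.mul_left _).add_one

theorem isComposite_of_dvd {p N : ℕ} (hp : 1 < p) (hpN : p ∣ N) (hlt : p < N) :
    IsComposite N := by
  obtain ⟨b, rfl⟩ := hpN
  refine ⟨p, b, hp, ?_, rfl⟩
  by_contra! hb
  interval_cases b <;> omega

theorem isSierpinski_of_covering {k k₀ M L : ℕ} {S : List ℕ} (hk : Odd k)
    (hkk₀ : k ≡ k₀ [MOD M]) (hL : 2 ^ L ≡ 1 [MOD M]) (hL₀ : 0 < L)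
    (hS : ∀ p ∈ S, 1 < p ∧ p ≤ k ∧ p ∣ M) (hcover : ∀ r < L, ∃ p ∈ S, p ∣ k₀ * 2 ^ r + 1) :
    IsSierpinski k := by
  refine ⟨hk.pos, hk, fun n hn => ?_⟩
  obtain ⟨p, hpS, hp⟩ := hcover (n % L) (Nat.mod_lt n hL₀)
  obtain ⟨hp₁, hpk, hpM⟩ := hS p hpS
  have hpow : 2 ^ n ≡ 2 ^ (n % L) [MOD M] := by
    have h := (hL.pow (n / L)).mul_left (2 ^ (n % L))
    rwa [one_pow, mul_one, ← pow_mul, ← pow_add, Nat.mod_add_div] at h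
  have hN : k * 2 ^ n + 1 ≡ k₀ * 2 ^ (n % L) + 1 [MOD M] := (hkk₀.mul hpow).add_right 1
  have hk2 : k < k * 2 ^ n := lt_mul_right hk.pos (Nat.one_lt_two_pow hn.ne')
  exact isComposite_of_dvd hp₁ ((hN.dvd_iff hpM).mpr hp) (by omega)

/-- `2^15 ≡ 1 (mod 7)`, so the sum is `56 ≡ 0` there; modulo the other prime-power factors
`9, 5, 13, 17, 241` of `2^24 - 1`, `2^15 - 1` is a unit and `(2^15)^8 = 1`. -/
theorem geom_sum_fifty_six_eq_zero : ∑ i ∈ range 56, ((2 : ZMod (2 ^ 24 - 1)) ^ 15) ^ i = 0 := by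
  decide

theorem repinteger_modEq {t : ℕ} (ht : t ≡ 25 [MOD 56]) :
    18107 * ∑ i ∈ range t, (2 ^ 15) ^ i ≡ 18107 * ∑ i ∈ range 25, (2 ^ 15) ^ i
      [MOD 2 ^ 24 - 1] := by
  refine Nat.ModEq.mul_left _ ?_
  rw [← ZMod.natCast_eq_natCast_iff]
  simp only [Nat.cast_sum, Nat.cast_pow, Nat.cast_ofNat]
  rw [geom_sum_eq_geom_sum_mod geom_sum_fifty_six_eq_zero t,
    geom_sum_eq_geom_sum_mod geom_sum_fifty_six_eq_zero 25, ht]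

theorem repinteger_covering :
    ∀ r < 24, ∃ p ∈ [3, 5, 7, 13, 17, 241],
      p ∣ 18107 * (∑ i ∈ range 25, (2 ^ 15) ^ i) * 2 ^ r + 1 := by
  decide

theorem stmt_4_general (t : ℕ) (hmod : t ≡ 25 [MOD 56]) :
    IsSierpinski (18107 * ((2 ^ (15 * t) - 1) / (2 ^ 15 - 1))) := by
  rw [pow_mul, ← Nat.geomSum_eq (by norm_num)]
  have ht : 0 < t := Nat.pos_of_ne_zero (by rintro rfl; exact absurd hmod (by decide))
  have hQ : Odd (∑ i ∈ range t, (2 ^ 15) ^ i) := Nat.odd_geom_sum_of_even (by decide) ht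
  have hodd : Odd (18107 * ∑ i ∈ range t, (2 ^ 15) ^ i) := Nat.odd_mul.mpr ⟨by decide, hQ⟩
  have hS : ∀ p ∈ [3, 5, 7, 13, 17, 241], 1 < p ∧ p ≤ 241 ∧ p ∣ 2 ^ 24 - 1 := by decide
  refine isSierpinski_of_covering hodd (repinteger_modEq hmod) (L := 24) (by decide) (by norm_num)
    (fun p hp => ?_) repinteger_covering
  obtain ⟨hp₁, hp₂, hpM⟩ := hS p hp
  exact ⟨hp₁, by linarith [hQ.pos], hpM⟩

/-- For every positive integer `t` with `t ≡ 25 (mod 56)`, the integer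
`18107·(2^{15t} − 1)/(2^{15} − 1)` is a Sierpiński number. -/
theorem stmt_4 (t : ℕ) (ht : 0 < t) (hmod : t ≡ 25 [MOD 56]) :
    IsSierpinski (18107 * ((2 ^ (15 * t) - 1) / (2 ^ 15 - 1))) :=
  stmt_4_general t hmod
end

section
/- Every positive integer k with k ≡ 8007257 (mod 11184810) is a Sierpiński number. -/
/-! Covering congruences: every `k ≡ 8007257 (mod 11184810)` is congruent to `8007257` modulo each
of the primes `3, 5, 7, 13, 17, 241`, all of which divide `2 ^ 24 - 1`. Hence `k * 2 ^ n + 1` modulo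
such a prime depends only on `n % 24`, and for each of the 24 residues one of these primes divides
`8007257 * 2 ^ r + 1`. That prime is at most `11184810 < 2 * 8007257`, so it is a proper divisor
of `k * 2 ^ n + 1` as soon as `n ≥ 1`. -/

theorem IsComposite.of_dvd {p N : ℕ} (hp : 1 < p) (hpN : p < N) (hdvd : p ∣ N) :
    IsComposite N := by
  obtain ⟨b, rfl⟩ := hdvd
  refine ⟨p, b, hp, ?_, rfl⟩
  by_contra! hb
  exact hpN.not_ge (mul_le_of_le_one_right' hb)

theorem Nat.ModEq.pow_eq_pow_mod {a m p : ℕ} (h : a ^ m ≡ 1 [MOD p]) (n : ℕ) :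
    a ^ n ≡ a ^ (n % m) [MOD p] := by
  rw [← ZMod.natCast_eq_natCast_iff] at h ⊢
  push_cast at h ⊢
  exact _root_.pow_eq_pow_mod n h

theorem exists_dvd_mul_pow_add_one_of_covering {b k k₀ m M : ℕ} {S : Finset ℕ}
    (hk : k ≡ k₀ [MOD M]) (hSM : ∀ p ∈ S, p ∣ M) (hperiod : ∀ p ∈ S, b ^ m ≡ 1 [MOD p])
    (hcover : ∀ r < m, ∃ p ∈ S, p ∣ k₀ * b ^ r + 1) (hm : 0 < m) (n : ℕ) :
    ∃ p ∈ S, p ∣ k * b ^ n + 1 := by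
  obtain ⟨p, hpS, hp⟩ := hcover (n % m) (Nat.mod_lt n hm)
  have hmodp : k * b ^ n + 1 ≡ k₀ * b ^ (n % m) + 1 [MOD p] :=
    ((hk.of_dvd (hSM p hpS)).mul ((hperiod p hpS).pow_eq_pow_mod n)).add_right 1
  exact ⟨p, hpS, Nat.modEq_zero_iff_dvd.mp (hmodp.trans (Nat.modEq_zero_iff_dvd.mpr hp))⟩

def coveringPrimes : Finset ℕ := {3, 5, 7, 13, 17, 241}

theorem coveringPrimes_spec :
    ∀ p ∈ coveringPrimes, 1 < p ∧ p ∣ 11184810 ∧ 2 ^ 24 ≡ 1 [MOD p] := by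
  decide

theorem coveringPrimes_cover :
    ∀ r < 24, ∃ p ∈ coveringPrimes, p ∣ 8007257 * 2 ^ r + 1 := by
  decide

theorem stmt_5_general (k : ℕ) (hmod : k ≡ 8007257 [MOD 11184810]) :
    IsSierpinski k := by
  have hk : 8007257 ≤ k := hmod.symm.trans_le (Nat.mod_le k _)
  refine ⟨by omega, Nat.odd_iff.mpr (hmod.of_dvd (by norm_num : 2 ∣ 11184810)), fun n hn => ?_⟩
  obtain ⟨p, hpS, hpdvd⟩ := exists_dvd_mul_pow_add_one_of_covering hmod
    (fun p hp => (coveringPrimes_spec p hp).2.1) (fun p hp => (coveringPrimes_spec p hp).2.2)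
    coveringPrimes_cover (by norm_num) n
  obtain ⟨hp1, hpM, -⟩ := coveringPrimes_spec p hpS
  have hp_le : p ≤ 11184810 := Nat.le_of_dvd (by norm_num) hpM
  have h2n : 2 ≤ 2 ^ n := Nat.le_self_pow hn.ne' 2
  exact IsComposite.of_dvd hp1 (by nlinarith) hpdvd

/-- Every positive integer `k` with `k ≡ 8007257 (mod 11184810)` is a
Sierpiński number. -/
theorem stmt_5 (k : ℕ) (hk : 0 < k) (hmod : k ≡ 8007257 [MOD 11184810]) :
    IsSierpinski k :=
  stmt_5_general k hmod
end

section
/- For every positive integer t with t ≡ 31 (mod 56), the integer 18107·(2^{15t} − 1)/(2^{15} − 1) (the 2-repinteger consisting of the 15-bit binary string of 18107 repeated t times) is a Riesel number. -/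
/-- A Riesel number is an odd positive integer `k` such that `k·2^n − 1` is composite
for every positive integer `n`. -/
def IsRiesel (k : ℕ) : Prop := 0 < k ∧ Odd k ∧ ∀ n : ℕ, 0 < n → IsComposite (k * 2 ^ n - 1)

/-- Blocks of length 56 of the geometric series vanish mod p when the sum of one block does. -/
lemma block_zero {p : ℕ} (hsum : (∑ i ∈ Finset.range 56, (32768 : ZMod p)^i) = 0) :
    ∀ s : ℕ, (∑ i ∈ Finset.range (56*s), (32768 : ZMod p)^i) = 0 := by
  intro s
  induction s with
  | zero => simp
  | succ s ih =>
    have h : 56*(s+1) = 56*s + 56 := by ring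
    rw [h, Finset.sum_range_add]
    have : ∑ i ∈ Finset.range 56, (32768 : ZMod p)^(56*s + i)
        = (32768 : ZMod p)^(56*s) * ∑ i ∈ Finset.range 56, (32768 : ZMod p)^i := by
      rw [Finset.mul_sum]
      exact Finset.sum_congr rfl fun i _ => (pow_add _ _ _)
    rw [this, hsum, ih, mul_zero, add_zero]

/-- Key covering lemma: if the modular data checks out for prime modulus p,
then `p` divides `K·2^n − 1` for `n ≡ r (mod d)`. -/
lemma cover_lemma (p d r : ℕ)
    (h56 : (32768 : ZMod p)^56 = 1)
    (hsum : (∑ i ∈ Finset.range 56, (32768 : ZMod p)^i) = 0)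
    (h2d : (2 : ZMod p)^d = 1)
    (hval : (18107 : ZMod p) * (∑ i ∈ Finset.range 31, (32768 : ZMod p)^i) * 2^r = 1)
    (s n : ℕ) (hn : n % d = r) :
    (18107 * ∑ i ∈ Finset.range (56*s+31), (32768:ℕ)^i) * 2^n ≡ 1 [MOD p] := by
  have key : (((18107 * ∑ i ∈ Finset.range (56*s+31), (32768:ℕ)^i) * 2^n : ℕ) : ZMod p)
      = ((1 : ℕ) : ZMod p) := by
    push_cast
    rw [Finset.sum_range_add, block_zero hsum s, zero_add]
    have hblock : ∑ i ∈ Finset.range 31, (32768 : ZMod p)^(56*s + i)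
        = ∑ i ∈ Finset.range 31, (32768 : ZMod p)^i := by
      refine Finset.sum_congr rfl fun i _ => ?_
      rw [pow_add, pow_mul, h56, one_pow, one_mul]
    rw [hblock]
    have h2n : (2 : ZMod p)^n = 2^r := by
      conv_lhs => rw [← Nat.div_add_mod n d, hn, pow_add, pow_mul, h2d, one_pow, one_mul]
    rw [h2n]
    linear_combination hval
  exact (ZMod.natCast_eq_natCast_iff _ _ _).mp key

/-- For every positive integer `t` with `t ≡ 31 (mod 56)`, the integer
`18107·(2^{15t} − 1)/(2^{15} − 1)` is a Riesel number. -/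
theorem stmt_6 (t : ℕ) (ht : 0 < t) (hmod : t ≡ 31 [MOD 56]) :
    IsRiesel (18107 * ((2 ^ (15 * t) - 1) / (2 ^ 15 - 1))) := by
  -- extract s with t = 56*s + 31
  have hm : t % 56 = 31 := hmod
  obtain ⟨s, hts⟩ : ∃ s, t = 56*s + 31 := ⟨t / 56, by omega⟩
  subst hts
  -- the quotient is a geometric sum
  have hgeom : ∀ m : ℕ, (∑ i ∈ Finset.range m, (32768:ℕ)^i) * 32767 + 1 = 2^(15*m) := by
    intro m
    induction m with
    | zero => simp
    | succ m ih =>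
      rw [Finset.sum_range_succ, add_mul]
      have h1 : (32768:ℕ)^m = 2^(15*m) := by
        rw [show (32768:ℕ) = 2^15 by norm_num, ← pow_mul]
      have h2 : (2:ℕ)^(15*(m+1)) = 2^(15*m) * 32768 := by
        rw [show 15*(m+1) = 15*m + 15 by ring, pow_add]
        norm_num
      rw [h2, ← h1]; rw [← h1] at ih; linarith
  have hdiv : (2 ^ (15 * (56*s+31)) - 1) / (2 ^ 15 - 1)
      = ∑ i ∈ Finset.range (56*s+31), (32768:ℕ)^i := by
    have h := hgeom (56*s+31)
    have h2 : 2 ^ (15 * (56*s+31)) - 1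
        = (∑ i ∈ Finset.range (56*s+31), (32768:ℕ)^i) * (2^15 - 1) := by
      norm_num
      omega
    rw [h2, Nat.mul_div_cancel _ (by norm_num)]
  rw [hdiv]
  -- the sum is at least 32769
  have hSbig : 32769 ≤ ∑ i ∈ Finset.range (56*s+31), (32768:ℕ)^i := by
    calc 32769 = ∑ i ∈ Finset.range 2, (32768:ℕ)^i := by decide
    _ ≤ _ := Finset.sum_le_sum_of_subset (Finset.range_subset_range.mpr (by omega))
  have hSpos : 0 < ∑ i ∈ Finset.range (56*s+31), (32768:ℕ)^i := by omega
  refine ⟨Nat.mul_pos (by norm_num) hSpos, ?_, ?_⟩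
  · -- Odd
    have hE := hgeom (56*s+31)
    have heq : (∑ i ∈ Finset.range (56*s+31), (32768:ℕ)^i) * 32767
        = 2^(15*(56*s+31)) - 1 := Nat.eq_sub_of_add_eq hE
    have hev : Even ((2:ℕ)^(15*(56*s+31))) := (Nat.even_pow).mpr ⟨even_two, by omega⟩
    have hodd1 : Odd ((∑ i ∈ Finset.range (56*s+31), (32768:ℕ)^i) * 32767) := by
      rw [heq]
      exact Nat.Even.sub_odd Nat.one_le_two_pow hev odd_one
    exact (Nat.odd_mul).mpr ⟨by decide, ((Nat.odd_mul).mp hodd1).1⟩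
  · -- composite
    intro n hn
    -- find a covering prime
    have hcov : ∃ p : ℕ, 1 < p ∧ p ≤ 241 ∧
        (18107 * ∑ i ∈ Finset.range (56*s+31), (32768:ℕ)^i) * 2^n ≡ 1 [MOD p] := by
      by_cases c2 : n % 2 = 1
      · exact ⟨3, by norm_num, by norm_num,
          cover_lemma 3 2 1 (by decide) (by decide) (by decide) (by decide) s n c2⟩
      by_cases c4 : n % 4 = 0
      · exact ⟨5, by norm_num, by norm_num,
          cover_lemma 5 4 0 (by decide) (by decide) (by decide) (by decide) s n c4⟩
      by_cases c3 : n % 3 = 0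
      · exact ⟨7, by norm_num, by norm_num,
          cover_lemma 7 3 0 (by decide) (by decide) (by decide) (by decide) s n c3⟩
      by_cases c12 : n % 12 = 2
      · exact ⟨13, by norm_num, by norm_num,
          cover_lemma 13 12 2 (by decide) (by decide) (by decide) (by decide) s n c12⟩
      by_cases c8 : n % 8 = 2
      · exact ⟨17, by norm_num, by norm_num,
          cover_lemma 17 8 2 (by decide) (by decide) (by decide) (by decide) s n c8⟩
      · have e4 : n % 4 = 2 := by omega
        have e8 : n % 8 = 6 := by omega
        have e12 : n % 12 = 10 := by omega
        have e24 : n % 24 = 22 := by omega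
        exact ⟨241, by norm_num, by norm_num,
          cover_lemma 241 24 22 (by decide) (by decide) (by decide) (by decide) s n e24⟩
    obtain ⟨p, hp1, hp241, hpm⟩ := hcov
    have hK1 : 1 ≤ (18107 * ∑ i ∈ Finset.range (56*s+31), (32768:ℕ)^i) * 2^n :=
      Nat.mul_pos (Nat.mul_pos (by norm_num) hSpos) (pow_pos two_pos n)
    have hdvd : p ∣ (18107 * ∑ i ∈ Finset.range (56*s+31), (32768:ℕ)^i) * 2^n - 1 :=
      (Nat.modEq_iff_dvd' hK1).mp hpm.symm
    obtain ⟨b, hb⟩ := hdvd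
    refine ⟨p, b, hp1, ?_, hb⟩
    -- b > 1 since the number is bigger than p
    have h2n : 1 ≤ (2:ℕ)^n := Nat.one_le_two_pow
    have hmul : 18107 * 32769 ≤ 18107 * ∑ i ∈ Finset.range (56*s+31), (32768:ℕ)^i :=
      Nat.mul_le_mul_left _ hSbig
    have hle : 18107 * ∑ i ∈ Finset.range (56*s+31), (32768:ℕ)^i
        ≤ (18107 * ∑ i ∈ Finset.range (56*s+31), (32768:ℕ)^i) * 2^n :=
      Nat.le_mul_of_pos_right _ (pow_pos two_pos n)
    have hbig : 2 * 241 < (18107 * ∑ i ∈ Finset.range (56*s+31), (32768:ℕ)^i) * 2^n - 1 := by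
      omega
    by_contra hble
    have hb1 : b ≤ 1 := by omega
    have : p * b ≤ p := by
      calc p * b ≤ p * 1 := Nat.mul_le_mul_left _ hb1
      _ = p := mul_one p
    omega
end

section
/- For every integer b > 509203, there exist infinitely many positive integers t such that the b-repdigit 509203·(b^t − 1)/(b − 1) is a Riesel number; in particular, for every integer b > 509203 there exist infinitely many b-repdigit Riesel numbers. -/
open Finset


lemma cover509203 (p K n : ℕ) (pp : Nat.Prime p) (hpM : p ∣ 11184810)
    (hK : K % 11184810 = 509203)
    (h24 : (2 : ZMod p) ^ 24 = 1)
    (hr : (509203 : ZMod p) * 2 ^ (n % 24) = 1)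
    (hbig : 2 * p < K) :
    IsComposite (K * 2 ^ n - 1) := by
  have hp1 : 1 < p := pp.one_lt
  have hK1 : 1 ≤ K * 2 ^ n := by
    have : 0 < 2 ^ n := Nat.pow_pos (by norm_num)
    have : 0 < K := by omega
    exact Nat.one_le_iff_ne_zero.mpr (by positivity)
  have eM : ((11184810 : ℕ) : ZMod p) = 0 :=
    (ZMod.natCast_eq_zero_iff _ _).mpr hpM
  have eM' : (11184810 : ZMod p) = 0 := by exact_mod_cast eM
  have e1 : (K : ZMod p) = 509203 := by
    conv_lhs => rw [← Nat.div_add_mod K 11184810, hK]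
    push_cast
    rw [eM', zero_mul, zero_add]
  have e2 : (2 : ZMod p) ^ n = 2 ^ (n % 24) := by
    conv_lhs => rw [← Nat.div_add_mod n 24]
    rw [pow_add, pow_mul, h24, one_pow, one_mul]
  have hz : ((K * 2 ^ n - 1 : ℕ) : ZMod p) = 0 := by
    rw [Nat.cast_sub hK1]
    push_cast
    rw [e1, e2, hr, sub_self]
  obtain ⟨q, hq⟩ := (ZMod.natCast_eq_zero_iff _ _).mp hz
  refine ⟨p, q, hp1, ?_, hq⟩
  by_contra hq1
  have hqle : q ≤ 1 := by omega
  have h1 : p * q ≤ p * 1 := Nat.mul_le_mul_left p hqle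
  have h2 : K ≤ K * 2 ^ n := Nat.le_mul_of_pos_right K (Nat.pow_pos (by norm_num))
  omega


lemma prime_dvd_bS (p : ℕ) (pp : Nat.Prime p)
    (hpL : p ∣ 2684354400) (hp1 : (p - 1) ∣ 2684354400) (b : ℕ) :
    p ∣ b * ∑ i ∈ range 2684354400, b ^ i := by
  haveI : Fact (Nat.Prime p) := ⟨pp⟩
  rw [← ZMod.natCast_eq_zero_iff]
  push_cast
  set x : ZMod p := (b : ZMod p) with hx
  by_cases hx0 : x = 0
  · rw [hx0, zero_mul]
  by_cases hx1 : x = 1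
  · rw [hx1]
    simp only [one_pow, sum_const, card_range, nsmul_eq_mul, mul_one, one_mul]
    exact_mod_cast (ZMod.natCast_eq_zero_iff 2684354400 p).mpr hpL
  · have hxL : x ^ 2684354400 = 1 := by
      rw [← Nat.mul_div_cancel' hp1, pow_mul, ZMod.pow_card_sub_one_eq_one hx0, one_pow]
    have h := geom_sum_mul x 2684354400
    rw [hxL, sub_self] at h
    rcases mul_eq_zero.mp h with h' | h'
    · rw [h', mul_zero]
    · exact absurd (sub_eq_zero.mp h') hx1

lemma N_dvd_bS (b : ℕ) : 11184810 ∣ b * ∑ i ∈ range 2684354400, b ^ i := by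
  have h2 := prime_dvd_bS 2 (by norm_num) (by norm_num) (by norm_num) b
  have h3 := prime_dvd_bS 3 (by norm_num) (by norm_num) (by norm_num) b
  have h5 := prime_dvd_bS 5 (by norm_num) (by norm_num) (by norm_num) b
  have h7 := prime_dvd_bS 7 (by norm_num) (by norm_num) (by norm_num) b
  have h13 := prime_dvd_bS 13 (by norm_num) (by norm_num) (by norm_num) b
  have h17 := prime_dvd_bS 17 (by norm_num) (by norm_num) (by norm_num) b
  have h241 := prime_dvd_bS 241 (by norm_num) (by norm_num) (by norm_num) b
  have h6 : (6:ℕ) ∣ _ := Nat.Coprime.mul_dvd_of_dvd_of_dvd (by norm_num) h2 h3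
  have h30 : (30:ℕ) ∣ _ := Nat.Coprime.mul_dvd_of_dvd_of_dvd (by norm_num) h6 h5
  have h210 : (210:ℕ) ∣ _ := Nat.Coprime.mul_dvd_of_dvd_of_dvd (by norm_num) h30 h7
  have h2730 : (2730:ℕ) ∣ _ := Nat.Coprime.mul_dvd_of_dvd_of_dvd (by norm_num) h210 h13
  have h46410 : (46410:ℕ) ∣ _ := Nat.Coprime.mul_dvd_of_dvd_of_dvd (by norm_num) h2730 h17
  exact Nat.Coprime.mul_dvd_of_dvd_of_dvd (by norm_num) h46410 h241

lemma N_dvd_bSk (b k : ℕ) : 11184810 ∣ b * ∑ i ∈ range (k * 2684354400), b ^ i := by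
  induction k with
  | zero => simp
  | succ k ih =>
    have : (k + 1) * 2684354400 = k * 2684354400 + 2684354400 := by ring
    rw [this, Finset.sum_range_add]
    have e : ∀ i, b ^ (k * 2684354400 + i) = b ^ (k * 2684354400) * b ^ i := fun i => pow_add b _ i
    simp only [e, ← Finset.mul_sum]
    rw [mul_add]
    refine dvd_add ih ?_
    rw [show b * (b ^ (k * 2684354400) * ∑ i ∈ range 2684354400, b ^ i)
        = b ^ (k * 2684354400) * (b * ∑ i ∈ range 2684354400, b ^ i) by ring]
    exact Dvd.dvd.mul_left (N_dvd_bS b) _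

lemma geom_eq (b : ℕ) (hb : 1 ≤ b) : ∀ t, (b - 1) * ∑ i ∈ range t, b ^ i = b ^ t - 1 := by
  intro t
  induction t with
  | zero => simp
  | succ t ih =>
    rw [Finset.sum_range_succ, mul_add, ih]
    have h1 : 1 ≤ b ^ t := Nat.one_le_pow t b (by omega)
    have hle : b ^ t ≤ b ^ (t + 1) := Nat.pow_le_pow_right (by omega) (by omega)
    have e : (b - 1) * b ^ t = b ^ (t + 1) - b ^ t := by
      rw [Nat.sub_mul, one_mul, ← pow_succ']
    rw [e]
    omega

/-- For every integer `b > 509203`, there exist infinitely many positive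
integers `t` such that the `b`-repdigit `509203·(b^t − 1)/(b − 1)` is a Riesel number. -/

theorem stmt_9 (b : ℕ) (hb : 509203 < b) :
    {t : ℕ | 0 < t ∧ IsRiesel (509203 * ((b ^ t - 1) / (b - 1)))}.Infinite := by
  apply Set.infinite_of_injective_forall_mem (f := fun k : ℕ => k * 2684354400 + 1)
  · intro a1 a2 h
    simp only at h
    omega
  · intro k
    refine ⟨by omega, ?_⟩
    have hdiv : (b ^ (k * 2684354400 + 1) - 1) / (b - 1)
        = ∑ i ∈ Finset.range (k * 2684354400 + 1), b ^ i := by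
      rw [← geom_eq b (by omega) (k * 2684354400 + 1),
        Nat.mul_div_cancel_left _ (by omega : 0 < b - 1)]
    rw [hdiv]
    obtain ⟨m, hm⟩ := N_dvd_bSk b k
    have hsplit : ∑ i ∈ Finset.range (k * 2684354400 + 1), b ^ i
        = b * (∑ i ∈ Finset.range (k * 2684354400), b ^ i) + 1 := by
      rw [Finset.sum_range_succ']
      simp [pow_succ', Finset.mul_sum]
    set S := ∑ i ∈ Finset.range (k * 2684354400 + 1), b ^ i with hS
    have hSm : S = 11184810 * m + 1 := by rw [hsplit, hm]
    set K := 509203 * S with hK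
    have hKeq : K = 11184810 * (509203 * m) + 509203 := by rw [hK, hSm]; ring
    have hKmod : K % 11184810 = 509203 := by omega
    have hKge : 509203 ≤ K := by omega
    refine ⟨by omega, ?_, ?_⟩
    · rw [Nat.odd_iff, ← Nat.mod_mod_of_dvd K (by norm_num : (2:ℕ) ∣ 11184810), hKmod]
    · intro n hn
      have h24 : n % 24 < 24 := Nat.mod_lt _ (by norm_num)
      have hc : n % 24 = 0 ∨ n % 24 = 1 ∨ n % 24 = 2 ∨ n % 24 = 3 ∨ n % 24 = 4 ∨ n % 24 = 5 ∨ n % 24 = 6 ∨ n % 24 = 7 ∨ n % 24 = 8 ∨ n % 24 = 9 ∨ n % 24 = 10 ∨ n % 24 = 11 ∨ n % 24 = 12 ∨ n % 24 = 13 ∨ n % 24 = 14 ∨ n % 24 = 15 ∨ n % 24 = 16 ∨ n % 24 = 17 ∨ n % 24 = 18 ∨ n % 24 = 19 ∨ n % 24 = 20 ∨ n % 24 = 21 ∨ n % 24 = 22 ∨ n % 24 = 23 := by omega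
      rcases hc with h|h|h|h|h|h|h|h|h|h|h|h|h|h|h|h|h|h|h|h|h|h|h|h
      · exact cover509203 3 K n (by norm_num) (by norm_num) hKmod (by decide)
          (by rw [h]; decide) (by omega)
      · exact cover509203 5 K n (by norm_num) (by norm_num) hKmod (by decide)
          (by rw [h]; decide) (by omega)
      · exact cover509203 3 K n (by norm_num) (by norm_num) hKmod (by decide)
          (by rw [h]; decide) (by omega)
      · exact cover509203 241 K n (by norm_num) (by norm_num) hKmod (by decide)
          (by rw [h]; decide) (by omega)
      · exact cover509203 3 K n (by norm_num) (by norm_num) hKmod (by decide)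
          (by rw [h]; decide) (by omega)
      · exact cover509203 5 K n (by norm_num) (by norm_num) hKmod (by decide)
          (by rw [h]; decide) (by omega)
      · exact cover509203 3 K n (by norm_num) (by norm_num) hKmod (by decide)
          (by rw [h]; decide) (by omega)
      · exact cover509203 13 K n (by norm_num) (by norm_num) hKmod (by decide)
          (by rw [h]; decide) (by omega)
      · exact cover509203 3 K n (by norm_num) (by norm_num) hKmod (by decide)
          (by rw [h]; decide) (by omega)
      · exact cover509203 5 K n (by norm_num) (by norm_num) hKmod (by decide)
          (by rw [h]; decide) (by omega)
      · exact cover509203 3 K n (by norm_num) (by norm_num) hKmod (by decide)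
          (by rw [h]; decide) (by omega)
      · exact cover509203 7 K n (by norm_num) (by norm_num) hKmod (by decide)
          (by rw [h]; decide) (by omega)
      · exact cover509203 3 K n (by norm_num) (by norm_num) hKmod (by decide)
          (by rw [h]; decide) (by omega)
      · exact cover509203 5 K n (by norm_num) (by norm_num) hKmod (by decide)
          (by rw [h]; decide) (by omega)
      · exact cover509203 3 K n (by norm_num) (by norm_num) hKmod (by decide)
          (by rw [h]; decide) (by omega)
      · exact cover509203 17 K n (by norm_num) (by norm_num) hKmod (by decide)
          (by rw [h]; decide) (by omega)
      · exact cover509203 3 K n (by norm_num) (by norm_num) hKmod (by decide)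
          (by rw [h]; decide) (by omega)
      · exact cover509203 5 K n (by norm_num) (by norm_num) hKmod (by decide)
          (by rw [h]; decide) (by omega)
      · exact cover509203 3 K n (by norm_num) (by norm_num) hKmod (by decide)
          (by rw [h]; decide) (by omega)
      · exact cover509203 13 K n (by norm_num) (by norm_num) hKmod (by decide)
          (by rw [h]; decide) (by omega)
      · exact cover509203 3 K n (by norm_num) (by norm_num) hKmod (by decide)
          (by rw [h]; decide) (by omega)
      · exact cover509203 5 K n (by norm_num) (by norm_num) hKmod (by decide)
          (by rw [h]; decide) (by omega)
      · exact cover509203 3 K n (by norm_num) (by norm_num) hKmod (by decide)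
          (by rw [h]; decide) (by omega)
      · exact cover509203 7 K n (by norm_num) (by norm_num) hKmod (by decide)
          (by rw [h]; decide) (by omega)
end

section
/- Let b ≥ 2 be an integer with b ≡ 87 (mod 11184810) and let t be a positive integer with t ≡ 59 (mod 120). Then the b-repdigit 41·(b^t − 1)/(b − 1) is a Sierpiński number. -/
/-!
Modulo `M = 5592405 = 3·5·7·13·17·241` we have `b ≡ 87` and `87^t ≡ 87^59` (the order of `87`
divides `120` modulo every prime factor of `M` other than `3`, and `3 ∣ 87`); since `86` is a
unit modulo `M`, the repdigit `k` is congruent modulo `M` to the base-`87` repdigit of length `59`.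
As `2^24 ≡ 1 (mod M)`, the residue of `k·2^n + 1` modulo `M` depends only on `n mod 24`, and each
of the `24` residues is divisible by one of `3, 5, 7, 13, 17, 241` (a covering system). Since
`k > M`, this common factor is a proper divisor. Finally `k` is odd, being `41` times a sum of `t`
odd powers with `t` odd.
-/

namespace Nat.ModEq

theorem pow_add_mul_of_pow_add {m a s p : ℕ} (h : a ^ (s + p) ≡ a ^ s [MOD m]) (q : ℕ) :
    a ^ (s + p * q) ≡ a ^ s [MOD m] := by
  induction q with
  | zero => rw [mul_zero, add_zero]
  | succ q ih =>
    calc a ^ (s + p * (q + 1)) = a ^ (s + p * q) * a ^ p := by ring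
      _ ≡ a ^ s * a ^ p [MOD m] := ih.mul_right _
      _ = a ^ (s + p) := by ring
      _ ≡ a ^ s [MOD m] := h

theorem pow_of_pow_add {m a s p t : ℕ} (h : a ^ (s + p) ≡ a ^ s [MOD m]) (hst : s ≤ t)
    (ht : t ≡ s [MOD p]) : a ^ t ≡ a ^ s [MOD m] := by
  obtain ⟨q, hq⟩ := (Nat.modEq_iff_dvd' hst).mp ht.symm
  rw [show t = s + p * q by omega]
  exact pow_add_mul_of_pow_add h q

theorem repunit {m b b' t t' : ℕ} (hb : 0 < b) (hb' : 0 < b') (hcop : Nat.Coprime m (b' - 1))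
    (hbb' : b ≡ b' [MOD m]) (hpow : b ^ t ≡ b' ^ t' [MOD m]) :
    (b ^ t - 1) / (b - 1) ≡ (b' ^ t' - 1) / (b' - 1) [MOD m] := by
  have mul_repunit_add_one : ∀ c s, 0 < c → (c - 1) * ((c ^ s - 1) / (c - 1)) + 1 = c ^ s :=
    fun c s hc => by
      rw [Nat.mul_div_cancel' (by simpa using Nat.sub_dvd_pow_sub_pow c 1 s)]
      have := Nat.one_le_pow s c hc
      omega
  have hpred : b - 1 ≡ b' - 1 [MOD m] :=
    Nat.ModEq.add_right_cancel' 1 (by rwa [Nat.sub_add_cancel hb, Nat.sub_add_cancel hb'])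
  refine Nat.ModEq.cancel_left_of_coprime hcop ?_
  calc (b' - 1) * ((b ^ t - 1) / (b - 1))
      ≡ (b - 1) * ((b ^ t - 1) / (b - 1)) [MOD m] := (hpred.mul_right _).symm
    _ ≡ (b' - 1) * ((b' ^ t' - 1) / (b' - 1)) [MOD m] := Nat.ModEq.add_right_cancel' 1 <| by
        rwa [mul_repunit_add_one b t hb, mul_repunit_add_one b' t' hb']

end Nat.ModEq

theorem IsComposite.of_one_lt_gcd {N m : ℕ} (hgcd : 1 < Nat.gcd N m) (hm : 0 < m) (hmN : m < N) :
    IsComposite N := by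
  set d := Nat.gcd N m
  have hdN : d < N := (Nat.le_of_dvd hm (Nat.gcd_dvd_right N m)).trans_lt hmN
  obtain ⟨e, he⟩ := Nat.gcd_dvd_left N m
  refine ⟨d, e, hgcd, ?_, he⟩
  by_contra! he1
  interval_cases e <;> omega

theorem isComposite_mul_two_pow_add_one {k k₀ m p : ℕ} (hk : k ≡ k₀ [MOD m])
    (hperiod : 2 ^ p ≡ 1 [MOD m]) (hp : 0 < p) (hcover : ∀ r < p, 1 < Nat.gcd (k₀ * 2 ^ r + 1) m)
    (hm : 0 < m) (hmk : m < k) (n : ℕ) : IsComposite (k * 2 ^ n + 1) := by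
  have hpow : 2 ^ n ≡ 2 ^ (n % p) [MOD m] := by
    refine Nat.ModEq.pow_of_pow_add ?_ (Nat.mod_le n p) (Nat.mod_modEq n p).symm
    simpa [pow_add] using hperiod.mul_left (2 ^ (n % p))
  have hN : k * 2 ^ n + 1 ≡ k₀ * 2 ^ (n % p) + 1 [MOD m] := (hk.mul hpow).add_right 1
  refine IsComposite.of_one_lt_gcd ?_ hm ?_
  · rw [hN.gcd_eq]
    exact hcover _ (Nat.mod_lt n hp)
  · have := Nat.le_mul_of_pos_right k (Nat.two_pow_pos n)
    omega

theorem stmt_10_general (b t : ℕ) (hbmod : b ≡ 87 [MOD 11184810]) (htmod : t ≡ 59 [MOD 120]) :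
    IsSierpinski (41 * ((b ^ t - 1) / (b - 1))) := by
  have hb : b % 11184810 = 87 := hbmod
  have ht : t % 120 = 59 := htmod
  have hbM : b ≡ 87 [MOD 5592405] := hbmod.of_dvd (by norm_num)
  have hk : 41 * ((b ^ t - 1) / (b - 1)) ≡ 41 * ((87 ^ 59 - 1) / (87 - 1)) [MOD 5592405] :=
    (Nat.ModEq.repunit (by omega) (by norm_num) (by norm_num) hbM <|
      (hbM.pow t).trans (Nat.ModEq.pow_of_pow_add (by decide) (by omega) htmod)).mul_left 41
  rw [← Nat.geomSum_eq (by omega)] at hk ⊢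
  have hbig : 5592405 < 41 * ∑ i ∈ Finset.range t, b ^ i := by
    have := Finset.single_le_sum (fun i _ => Nat.zero_le (b ^ i))
      (Finset.mem_range.mpr (show 4 < t by omega))
    have := Nat.pow_le_pow_left (show 87 ≤ b by omega) 4
    omega
  have hodd : Odd (∑ i ∈ Finset.range t, b ^ i) := by
    rw [Finset.odd_sum_iff_odd_card_odd, Finset.filter_true_of_mem
      (fun i _ => (Nat.odd_iff.mpr (by omega)).pow), Finset.card_range, Nat.odd_iff]
    omega
  exact ⟨by omega, (show Odd 41 by decide).mul hodd, fun n _ =>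
    isComposite_mul_two_pow_add_one (p := 24) hk (by decide) (by norm_num) (by decide)
      (by norm_num) hbig n⟩

/-- Let `b ≥ 2` be an integer with `b ≡ 87 (mod 11184810)` and let `t`
be a positive integer with `t ≡ 59 (mod 120)`. Then the `b`-repdigit
`41·(b^t − 1)/(b − 1)` is a Sierpiński number. -/
theorem stmt_10 (b t : ℕ) (hb : 2 ≤ b) (hbmod : b ≡ 87 [MOD 11184810])
    (ht : 0 < t) (htmod : t ≡ 59 [MOD 120]) :
    IsSierpinski (41 * ((b ^ t - 1) / (b - 1))) :=
  stmt_10_general b t hbmod htmod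
end

section
/- Let τ be a positive integer such that 2^{2^τ} − 1 has at least two distinct primitive prime divisors. For each 1 ≤ j ≤ τ, let p_j be a primitive prime divisor of 2^{2^j} − 1, and define ℓ_j = 1 if p_j divides b, ℓ_j = p_j if b ≡ 1 (mod p_j), and ℓ_j = ord_{p_j}(b) otherwise (the multiplicative order of b modulo p_j). Let L = lcm(2, ℓ_1, ℓ_2, …, ℓ_τ), and let q be a primitive prime divisor of 2^{2^τ} − 1 with q ≠ p_τ. Let b > 2 be an integer not divisible by q satisfying one of: (i) b ≡ 1 (mod q) and q does not divide L; (ii) b ≢ 1 (mod q) and there exists an integer t with (b^t − 1)/(b − 1) ≡ −1 (mod q) and t ≡ 1 (mod L). Then there exist infinitely many positive integers t such that the b-repunit (b^t − 1)/(b − 1) is a Sierpiński number. -/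
/-- A prime `p` is a primitive prime divisor of `2^m − 1` if `p ∣ 2^m − 1` and
`p ∤ 2^μ − 1` for every positive integer `μ < m`. -/
def IsPrimitivePrimeDivisor (p m : ℕ) : Prop :=
  p.Prime ∧ p ∣ 2 ^ m - 1 ∧ ∀ μ : ℕ, 0 < μ → μ < m → ¬ p ∣ 2 ^ μ - 1

/-!
Write `K` for the repunit `∑_{i<t} bⁱ` and `n = 2ᵏ·c` with `c` odd. The primes `p_{k+1}` (for
`k < τ`) and `q` (for `k ≥ τ`) form a covering: `2^{2^k} ≡ -1 (mod p_{k+1})` and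
`2^{2^τ} ≡ 1 (mod q)`, so `K·2ⁿ + 1` is divisible by `p_{k+1}` as soon as `K ≡ 1 (mod p_{k+1})`,
and by `q` as soon as `K ≡ -1 (mod q)`. The repunit is `≡ 1 (mod p_j)` whenever `ℓ_j ∣ t - 1`,
and both congruence conditions on `t` hold along an arithmetic progression, produced in case (i)
by the Chinese remainder theorem and in case (ii) by periodicity of `t ↦ K mod q`. Taking `t`
large makes `K` exceed every prime of the covering, and `t` odd makes `K` odd.
-/

open Finset Filter

lemma isComposite_of_dvd_s12 {d N : ℕ} (hd : 1 < d) (hdN : d ∣ N) (hdN' : d < N) :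
    IsComposite N := by
  obtain ⟨e, rfl⟩ := hdN
  refine ⟨d, e, hd, ?_, rfl⟩
  by_contra! he
  interval_cases e <;> omega

lemma isComposite_mul_two_pow_add_one_s12 {K r n : ℕ} (hr : 1 < r) (hrK : r < K)
    (h : (K : ZMod r) * 2 ^ n = -1) : IsComposite (K * 2 ^ n + 1) := by
  refine isComposite_of_dvd_s12 hr ((ZMod.natCast_eq_zero_iff _ _).mp ?_) ?_
  · push_cast
    rw [h, neg_add_cancel]
  · have : K ≤ K * 2 ^ n := Nat.le_mul_of_pos_right _ (by positivity)
    omega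

theorem isSierpinski_of_covering_s12 {τ K q : ℕ} {p : Fin τ → ℕ} (hp : ∀ j, (p j).Prime)
    (hp2 : ∀ j : Fin τ, (2 : ZMod (p j)) ^ 2 ^ j.val = -1) (hq : q.Prime)
    (hq2 : (2 : ZMod q) ^ 2 ^ τ = 1) (hK : Odd K) (hKp : ∀ j, (K : ZMod (p j)) = 1)
    (hKq : (K : ZMod q) = -1) (hpK : ∀ j, p j < K) (hqK : q < K) : IsSierpinski K := by
  refine ⟨hK.pos, hK, fun n hn => ?_⟩
  obtain ⟨k, c, hc, rfl⟩ := Nat.exists_eq_two_pow_mul_odd hn.ne'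
  by_cases hk : k < τ
  · refine isComposite_mul_two_pow_add_one_s12 (hp ⟨k, hk⟩).one_lt (hpK _) ?_
    rw [hKp, pow_mul, hp2 ⟨k, hk⟩, one_mul, hc.neg_one_pow]
  · obtain ⟨d, hd⟩ : 2 ^ τ ∣ 2 ^ k * c := (pow_dvd_pow 2 (by omega)).mul_right c
    refine isComposite_mul_two_pow_add_one_s12 hq.one_lt hqK ?_
    rw [hKq, hd, pow_mul, hq2, one_pow, mul_one]

lemma dvd_two_pow_sub_one_iff {p m : ℕ} : p ∣ 2 ^ m - 1 ↔ (2 : ZMod p) ^ m = 1 := by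
  rw [← ZMod.natCast_eq_zero_iff, Nat.cast_sub Nat.one_le_two_pow, sub_eq_zero]
  push_cast
  rfl

lemma IsPrimitivePrimeDivisor.two_pow_eq_one {p m : ℕ} (h : IsPrimitivePrimeDivisor p m) :
    (2 : ZMod p) ^ m = 1 :=
  dvd_two_pow_sub_one_iff.mp h.2.1

lemma IsPrimitivePrimeDivisor.two_pow_eq_neg_one {p e : ℕ}
    (h : IsPrimitivePrimeDivisor p (2 ^ (e + 1))) : (2 : ZMod p) ^ 2 ^ e = -1 := by
  have := Fact.mk h.1
  have hsq : ((2 : ZMod p) ^ 2 ^ e) ^ 2 = 1 := by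
    rw [← pow_mul, ← pow_succ, h.two_pow_eq_one]
  have hne : (2 : ZMod p) ^ 2 ^ e ≠ 1 := fun h1 =>
    h.2.2 (2 ^ e) (by positivity) (Nat.pow_lt_pow_right (by norm_num) e.lt_succ_self)
      (dvd_two_pow_sub_one_iff.mpr h1)
  exact (sq_eq_one_iff.mp hsq).resolve_left hne

lemma orderOf_natCast_pos {p b : ℕ} (hp : p.Prime) (hpb : ¬ p ∣ b) :
    0 < orderOf (b : ZMod p) := by
  have := Fact.mk hp
  have hb : (b : ZMod p) ≠ 0 := fun h => hpb ((ZMod.natCast_eq_zero_iff _ _).mp h)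
  exact (isOfFinOrder_iff_pow_eq_one.mpr
    ⟨p - 1, by have := hp.two_le; omega, ZMod.pow_card_sub_one_eq_one hb⟩).orderOf_pos

lemma natCast_ne_one_of_not_modEq {p b : ℕ} (h : ¬ b ≡ 1 [MOD p]) : (b : ZMod p) ≠ 1 := by
  rwa [Ne, ← Nat.cast_one, ZMod.natCast_eq_natCast_iff]

lemma geom_sum_eq_of_pow_eq {K : Type*} [DivisionRing K] {x : K} {m n : ℕ} (hx : x ≠ 1)
    (h : x ^ m = x ^ n) : ∑ i ∈ range m, x ^ i = ∑ i ∈ range n, x ^ i := by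
  rw [geom_sum_eq hx, geom_sum_eq hx, h]

lemma odd_geom_sum {b t : ℕ} (ht : Odd t) : Odd (∑ i ∈ range t, b ^ i) := by
  rw [odd_sum_iff_odd_card_odd]
  rcases Nat.even_or_odd b with hb | hb
  · have : {i ∈ range t | Odd (b ^ i)} = {0} := by
      ext i
      simp only [mem_filter, mem_range, mem_singleton, ← Nat.not_even_iff_odd, Nat.even_pow,
        hb, true_and, not_not]
      have := ht.pos
      omega
    simp [this]
  · simpa [filter_true_of_mem fun i _ => hb.pow] using ht

lemma le_geom_sum {b : ℕ} (hb : 1 ≤ b) (t : ℕ) : t ≤ ∑ i ∈ range t, b ^ i := by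
  simpa using card_nsmul_le_sum (range t) (b ^ ·) 1 fun i _ => Nat.one_le_pow _ _ hb

/-- The `ℓ_j` of the statement, for `p = p_j`. -/
noncomputable def repunitPeriod (p b : ℕ) : ℕ :=
  if p ∣ b then 1 else if b ≡ 1 [MOD p] then p else orderOf (b : ZMod p)

lemma repunitPeriod_pos {p : ℕ} (hp : p.Prime) (b : ℕ) : 0 < repunitPeriod p b := by
  unfold repunitPeriod
  split_ifs with hpb
  · exact one_pos
  · exact hp.pos
  · exact orderOf_natCast_pos hp hpb

lemma geom_sum_eq_one_of_repunitPeriod_dvd {p b t : ℕ} (hp : p.Prime) (ht : 1 ≤ t)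
    (h : repunitPeriod p b ∣ t - 1) : ∑ i ∈ range t, (b : ZMod p) ^ i = 1 := by
  have := Fact.mk hp
  unfold repunitPeriod at h
  split_ifs at h with hpb hb1
  · obtain ⟨s, rfl⟩ : ∃ s, t = s + 1 := ⟨t - 1, by omega⟩
    simp [(ZMod.natCast_eq_zero_iff _ _).mpr hpb, sum_range_succ']
  · have hb : (b : ZMod p) = 1 := by
      simpa using (ZMod.natCast_eq_natCast_iff b 1 p).mpr hb1
    have htp : ((t - 1 : ℕ) : ZMod p) = 0 := (ZMod.natCast_eq_zero_iff _ _).mpr h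
    rw [Nat.cast_sub ht, Nat.cast_one, sub_eq_zero] at htp
    simp [hb, htp]
  · have hpow : (b : ZMod p) ^ t = (b : ZMod p) ^ 1 :=
      pow_eq_pow_of_modEq ((Nat.modEq_iff_dvd' ht).mpr h).symm (pow_orderOf_eq_one _)
    simpa using geom_sum_eq_of_pow_eq (natCast_ne_one_of_not_modEq hb1) hpow

section Progression

variable {b q L : ℕ}

lemma frequently_modEq_and_geom_sum_eq_neg_one_of_modEq_one (hq : q.Prime)
    (hb : b ≡ 1 [MOD q]) (hqL : ¬ q ∣ L) :
    ∃ᶠ t in atTop, t ≡ 1 [MOD L] ∧ ∑ i ∈ range t, (b : ZMod q) ^ i = -1 := by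
  have hLq : L.Coprime q := (hq.coprime_iff_not_dvd.mpr hqL).symm
  have hL : L ≠ 0 := by rintro rfl; exact hqL (dvd_zero q)
  obtain ⟨k, hkL, hkq⟩ := Nat.chineseRemainder hLq 1 (q - 1)
  refine (Nat.frequently_modEq (mul_ne_zero hL hq.ne_zero) k).mono fun t ht => ⟨?_, ?_⟩
  · exact (Nat.ModEq.of_mul_right q ht).trans hkL
  · have htq : (t : ZMod q) = ((q - 1 : ℕ) : ZMod q) :=
      (ZMod.natCast_eq_natCast_iff _ _ q).mpr ((Nat.ModEq.of_mul_left L ht).trans hkq)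
    have hb' : (b : ZMod q) = 1 := by simpa using (ZMod.natCast_eq_natCast_iff b 1 q).mpr hb
    simp [hb', htq, Nat.cast_sub hq.one_le]

lemma frequently_modEq_and_geom_sum_eq_neg_one_of_not_modEq_one (hq : q.Prime)
    (hqb : ¬ q ∣ b) (hb : ¬ b ≡ 1 [MOD q]) (hL : L ≠ 0) {s : ℕ}
    (hsq : ∑ i ∈ range s, (b : ZMod q) ^ i = -1) (hsL : s ≡ 1 [MOD L]) :
    ∃ᶠ t in atTop, t ≡ 1 [MOD L] ∧ ∑ i ∈ range t, (b : ZMod q) ^ i = -1 := by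
  have := Fact.mk hq
  have hd := (orderOf_natCast_pos hq hqb).ne'
  refine (Nat.frequently_modEq (mul_ne_zero hL hd) s).mono fun t ht => ⟨?_, ?_⟩
  · exact (Nat.ModEq.of_mul_right _ ht).trans hsL
  · rw [← hsq]
    exact geom_sum_eq_of_pow_eq (natCast_ne_one_of_not_modEq hb)
      (pow_eq_pow_of_modEq (Nat.ModEq.of_mul_left L ht) (pow_orderOf_eq_one _))

end Progression

theorem isSierpinski_geom_sum {τ b q L t : ℕ} {p : Fin τ → ℕ} (hb : 1 ≤ b)
    (hp : ∀ j : Fin τ, IsPrimitivePrimeDivisor (p j) (2 ^ (j.val + 1)))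
    (hq : IsPrimitivePrimeDivisor q (2 ^ τ)) (h2L : 2 ∣ L)
    (hpL : ∀ j, repunitPeriod (p j) b ∣ L) (htL : t ≡ 1 [MOD L])
    (htq : ∑ i ∈ range t, (b : ZMod q) ^ i = -1) (hpt : ∀ j, p j < t) (hqt : q < t) :
    IsSierpinski (∑ i ∈ range t, b ^ i) := by
  have ht1 : 1 ≤ t := by omega
  have htL' : L ∣ t - 1 := (Nat.modEq_iff_dvd' ht1).mp htL.symm
  have hKt : t ≤ ∑ i ∈ range t, b ^ i := le_geom_sum hb t
  refine isSierpinski_of_covering_s12 (fun j => (hp j).1) (fun j => (hp j).two_pow_eq_neg_one)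
    hq.1 hq.two_pow_eq_one (odd_geom_sum (Nat.odd_iff.mpr (htL.of_dvd h2L))) (fun j => ?_)
    (by push_cast; exact htq) (fun j => (hpt j).trans_le hKt) (by omega)
  push_cast
  exact geom_sum_eq_one_of_repunitPeriod_dvd (hp j).1 ht1 ((hpL j).trans htL')

/-- Let `τ ≥ 1` be such that `2^{2^τ} − 1` has at least two distinct
primitive prime divisors.  For each `1 ≤ j ≤ τ` let `p_j` be a primitive prime divisor of
`2^{2^j} − 1` and define `ℓ_j = 1` if `p_j ∣ b`, `ℓ_j = p_j` if `b ≡ 1 (mod p_j)`, and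
`ℓ_j = ord_{p_j}(b)` otherwise.  Let `L = lcm(2, ℓ_1, …, ℓ_τ)` and let `q` be a primitive
prime divisor of `2^{2^τ} − 1` with `q ≠ p_τ`.  If `b > 2` is an integer with `q ∤ b`
satisfying (i) `b ≡ 1 (mod q)` and `q ∤ L`, or (ii) `b ≢ 1 (mod q)` and there exists `t`
with `(b^t − 1)/(b − 1) ≡ −1 (mod q)` and `t ≡ 1 (mod L)`, then there exist infinitely
many positive integers `t` such that the `b`-repunit `(b^t − 1)/(b − 1)` is a Sierpiński
number.  (Here `p_j` is indexed by `j : Fin τ`, with `p ⟨j⟩` a primitive prime divisor of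
`2^{2^{j+1}} − 1`, so `p_τ` is `p ⟨τ−1⟩`.) -/
theorem stmt_12 (τ : ℕ)
    (b : ℕ) (hb : 2 < b)
    (p : Fin τ → ℕ) (hp : ∀ j : Fin τ, IsPrimitivePrimeDivisor (p j) (2 ^ (j.val + 1)))
    (ℓ : Fin τ → ℕ)
    (hℓ : ∀ j : Fin τ, ℓ j = if p j ∣ b then 1 else if b ≡ 1 [MOD p j] then p j
      else orderOf (b : ZMod (p j)))
    (L : ℕ) (hL : L = Nat.lcm 2 (Finset.univ.lcm ℓ))
    (q : ℕ) (hq : IsPrimitivePrimeDivisor q (2 ^ τ))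
    (hqb : ¬ q ∣ b)
    (hcond : (b ≡ 1 [MOD q] ∧ ¬ q ∣ L) ∨
      (¬ b ≡ 1 [MOD q] ∧ ∃ t : ℕ,
        (((b ^ t - 1) / (b - 1) : ℕ) : ℤ) ≡ -1 [ZMOD (q : ℤ)] ∧ t ≡ 1 [MOD L])) :
    {t : ℕ | 0 < t ∧ IsSierpinski ((b ^ t - 1) / (b - 1))}.Infinite := by
  have hℓ' (j) : ℓ j = repunitPeriod (p j) b := hℓ j
  have hℓL (j) : repunitPeriod (p j) b ∣ L :=
    hL ▸ hℓ' j ▸ (dvd_lcm (mem_univ j)).trans (Nat.dvd_lcm_right _ _)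
  have h2L : 2 ∣ L := hL ▸ Nat.dvd_lcm_left _ _
  have hL0 : L ≠ 0 := hL ▸ Nat.lcm_ne_zero two_ne_zero (lcm_ne_zero_iff.mpr fun j _ =>
    hℓ' j ▸ (repunitPeriod_pos (hp j).1 b).ne')
  have hfreq : ∃ᶠ t in atTop, t ≡ 1 [MOD L] ∧ ∑ i ∈ range t, (b : ZMod q) ^ i = -1 := by
    rcases hcond with ⟨hb1, hqL⟩ | ⟨hb1, s, hs, hsL⟩
    · exact frequently_modEq_and_geom_sum_eq_neg_one_of_modEq_one hq.1 hb1 hqL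
    · refine frequently_modEq_and_geom_sum_eq_neg_one_of_not_modEq_one hq.1 hqb hb1 hL0 ?_ hsL
      rw [← Nat.geomSum_eq hb.le] at hs
      simpa using (ZMod.intCast_eq_intCast_iff _ _ q).mpr hs
  refine Nat.frequently_atTop_iff_infinite.mp <|
    (hfreq.and_eventually (eventually_gt_atTop (max q (univ.sup p)))).mono ?_
  rintro t ⟨⟨htL, htq⟩, htB⟩
  rw [← Nat.geomSum_eq hb.le]
  refine ⟨by omega, isSierpinski_geom_sum (by omega) hp hq h2L hℓL htL htq
    (fun j => (le_sup (f := p) (mem_univ j)).trans_lt (max_lt_iff.mp htB).2) (by omega)⟩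
end

section
/- Let k, 𝔱, and w be positive integers, and let z be a nonnegative integer; write ℓ = ⌊log_2(k)⌋ + 1 and k_2^{(z;t)} = k·(2^{(z+ℓ)t} − 1)/(2^{z+ℓ} − 1). Then the following are equivalent: (1) there exist a covering system {r_j (mod m_j) : 1 ≤ j ≤ τ} and pairwise distinct primes p_1, …, p_τ, with p_j a primitive prime divisor of 2^{m_j} − 1 for each j, such that for every positive integer t with t ≡ 𝔱 (mod w) and every 1 ≤ j ≤ τ one has k_2^{(z;t)}·2^{r_j} ≡ −1 (mod p_j); (2) there exist a covering system {r'_i (mod m'_i) : 1 ≤ i ≤ τ'} and pairwise distinct primes p'_1, …, p'_{τ'}, with p'_i a primitive prime divisor of 2^{m'_i} − 1 for each i, such that for every positive integer t' with t' ≡ −𝔱 (mod w) and every 1 ≤ i ≤ τ' one has k_2^{(z;t')}·2^{r'_i} ≡ 1 (mod p'_i). -/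
/-- The 2-repstring `k_2^{(z;t)} = k·(2^{(z+ℓ)t} − 1)/(2^{z+ℓ} − 1)`, where
`ℓ = ⌊log_2(k)⌋ + 1` is the number of binary digits of `k`. -/
def repstring2 (k z t : ℕ) : ℕ :=
  k * ((2 ^ ((z + (Nat.log 2 k + 1)) * t) - 1) / (2 ^ (z + (Nat.log 2 k + 1)) - 1))
/-!
Write `k_2^{(z;t)} = k · S t` with `S t = ∑_{i<t} x ^ i` and `x = 2^{z+ℓ}`. For a prime `p` of the
system, `p ∣ 2^m − 1` makes `2` a unit mod `p`. Since `S (v + v + t) = S v + x^v S v + x^{2v} S t`,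
if `k · 2^r · S ≡ ε (mod p)` holds at `v` and at `v + v + t`, then
`k · 2^{r + (z+ℓ)v} · S t ≡ −ε (mod p)`. Choosing one `v > 0` with `v ≡ a (mod w)` and shifting every
residue `r_j` by `(z+ℓ)v`, which keeps the covering, turns a certificate for the exponents `t ≡ a`
with target `ε` into one for `t ≡ −a` with target `−ε`. Applied to `(a, ε) = (𝔱, −1)` and to
`(−𝔱, 1)` this gives both implications.
-/

open Finset

theorem geom_sum_range_add {R : Type*} [Semiring R] (x : R) (a b : ℕ) :
    ∑ i ∈ range (a + b), x ^ i = ∑ i ∈ range a, x ^ i + x ^ a * ∑ i ∈ range b, x ^ i := by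
  simp only [sum_range_add, mul_sum, pow_add]

theorem mul_geom_sum_mul_pow_eq_neg {R : Type*} [CommRing R] {x c ε : R} (hx : IsUnit x)
    {v t : ℕ} (hv : c * ∑ i ∈ range v, x ^ i = ε)
    (hvvt : c * ∑ i ∈ range (v + v + t), x ^ i = ε) :
    c * (∑ i ∈ range t, x ^ i) * x ^ v = -ε := by
  rw [geom_sum_range_add, geom_sum_range_add, pow_add] at hvvt
  have : x ^ v * (c * (∑ i ∈ range t, x ^ i) * x ^ v + ε) = 0 := by
    linear_combination hvvt - (1 + x ^ v) * hv
  exact eq_neg_of_add_eq_zero_left ((hx.pow v).mul_right_eq_zero.mp this)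

theorem repstring2_eq_mul_geom_sum (k z t : ℕ) :
    repstring2 k z t = k * ∑ i ∈ range t, (2 ^ (z + (Nat.log 2 k + 1))) ^ i := by
  rw [repstring2, Nat.geomSum_eq (Nat.le_self_pow (by omega) 2), pow_mul]

theorem isUnit_two_of_dvd_two_pow_sub_one {m n : ℕ} (hm : m ≠ 0) (h : n ∣ 2 ^ m - 1) :
    IsUnit (2 : ZMod n) := by
  refine IsUnit.of_pow_eq_one ?_ hm
  have h0 := (ZMod.natCast_eq_zero_iff _ _).2 h
  rw [Nat.cast_sub Nat.one_le_two_pow] at h0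
  push_cast at h0
  exact sub_eq_zero.mp h0

theorem ZMod.natCast_eq_neg_one_iff_dvd {n N : ℕ} : (N : ZMod n) = -1 ↔ n ∣ N + 1 := by
  rw [← ZMod.natCast_eq_zero_iff, Nat.cast_add_one, eq_neg_iff_add_eq_zero]

theorem ZMod.natCast_eq_one_iff_modEq {n N : ℕ} : (N : ZMod n) = 1 ↔ N ≡ 1 [MOD n] := by
  rw [← ZMod.natCast_eq_natCast_iff, Nat.cast_one]

theorem exists_pos_natCast_modEq (a : ℤ) {w : ℕ} (hw : 0 < w) :
    ∃ v : ℕ, 0 < v ∧ (v : ℤ) ≡ a [ZMOD w] := by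
  refine ⟨(a % w).toNat + w, by omega, ?_⟩
  rw [Nat.cast_add, Int.toNat_of_nonneg (Int.emod_nonneg _ (by omega))]
  simp [Int.ModEq]

theorem covers_add_const {ι : Type*} {r m : ι → ℤ} (h : ∀ n : ℤ, ∃ j, n ≡ r j [ZMOD m j])
    (s : ℤ) (n : ℤ) : ∃ j, n ≡ r j + s [ZMOD m j] :=
  (h (n - s)).imp fun _ hj => by simpa using hj.add_right s

section
variable {k z : ℕ}

theorem repstring2_mul_two_pow_eq_neg {n w r v t : ℕ} {a ε : ℤ} (h2 : IsUnit (2 : ZMod n))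
    (hv : 0 < v) (hva : (v : ℤ) ≡ a [ZMOD w])
    (h : ∀ t : ℕ, 0 < t → (t : ℤ) ≡ a [ZMOD w] → ((repstring2 k z t * 2 ^ r : ℕ) : ZMod n) = ε)
    (ht : (t : ℤ) ≡ -a [ZMOD w]) :
    ((repstring2 k z t * 2 ^ (r + (z + (Nat.log 2 k + 1)) * v) : ℕ) : ZMod n) = (-ε : ℤ) := by
  have hvvt : ((v + v + t : ℕ) : ℤ) ≡ a [ZMOD w] := by
    simpa using (hva.add hva).add ht
  have hA := h v hv hva
  have hB := h (v + v + t) (by omega) hvvt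
  simp only [repstring2_eq_mul_geom_sum, Nat.cast_mul, Nat.cast_sum, Nat.cast_pow,
    Nat.cast_ofNat] at hA hB ⊢
  have := mul_geom_sum_mul_pow_eq_neg (c := (k : ZMod n) * 2 ^ r) (ε := ε)
    (h2.pow (z + (Nat.log 2 k + 1))) (v := v) (t := t)
    (by linear_combination hA) (by linear_combination hB)
  rw [pow_add _ r, pow_mul, Int.cast_neg]
  linear_combination this

/-- `ε = -1` is the Sierpiński condition, `ε = 1` the Riesel condition. -/
def HasRepstringCovering (k z w : ℕ) (a ε : ℤ) : Prop :=
  ∃ (τ : ℕ) (r m p : Fin τ → ℕ),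
    (∀ j, 0 < m j) ∧
    (∀ n : ℤ, ∃ j, n ≡ (r j : ℤ) [ZMOD (m j : ℤ)]) ∧
    Function.Injective p ∧
    (∀ j, IsPrimitivePrimeDivisor (p j) (m j)) ∧
    ∀ t : ℕ, 0 < t → (t : ℤ) ≡ a [ZMOD w] → ∀ j,
      ((repstring2 k z t * 2 ^ r j : ℕ) : ZMod (p j)) = ε

theorem HasRepstringCovering.neg {w : ℕ} {a ε : ℤ} (hw : 0 < w)
    (h : HasRepstringCovering k z w a ε) : HasRepstringCovering k z w (-a) (-ε) := by
  obtain ⟨τ, r, m, p, hm, hcov, hinj, hprim, hrep⟩ := h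
  obtain ⟨v, hv, hva⟩ := exists_pos_natCast_modEq a hw
  refine ⟨τ, fun j => r j + (z + (Nat.log 2 k + 1)) * v, m, p, hm, ?_, hinj, hprim,
    fun t _ ht j => ?_⟩
  · push_cast
    exact covers_add_const hcov _
  · exact repstring2_mul_two_pow_eq_neg
      (isUnit_two_of_dvd_two_pow_sub_one (hm j).ne' (hprim j).2.1) hv hva
      (fun t ht0 hta => hrep t ht0 hta j) ht

theorem hasRepstringCovering_neg_iff {w : ℕ} {a ε : ℤ} (hw : 0 < w) :
    HasRepstringCovering k z w (-a) (-ε) ↔ HasRepstringCovering k z w a ε :=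
  ⟨fun h => by simpa using h.neg hw, .neg hw⟩

end

theorem stmt_19_general (k 𝔱 w z : ℕ) (hw : 0 < w) :
    (∃ (τ : ℕ) (r m p : Fin τ → ℕ),
      (∀ j, 0 < m j) ∧
      (∀ n : ℤ, ∃ j, n ≡ (r j : ℤ) [ZMOD (m j : ℤ)]) ∧
      Function.Injective p ∧
      (∀ j, IsPrimitivePrimeDivisor (p j) (m j)) ∧
      (∀ t : ℕ, 0 < t → t ≡ 𝔱 [MOD w] → ∀ j,
        p j ∣ repstring2 k z t * 2 ^ (r j) + 1)) ↔
    (∃ (τ' : ℕ) (r' m' p' : Fin τ' → ℕ),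
      (∀ i, 0 < m' i) ∧
      (∀ n : ℤ, ∃ i, n ≡ (r' i : ℤ) [ZMOD (m' i : ℤ)]) ∧
      Function.Injective p' ∧
      (∀ i, IsPrimitivePrimeDivisor (p' i) (m' i)) ∧
      (∀ t' : ℕ, 0 < t' → (t' : ℤ) ≡ -(𝔱 : ℤ) [ZMOD (w : ℤ)] → ∀ i,
        repstring2 k z t' * 2 ^ (r' i) ≡ 1 [MOD p' i])) := by
  have h := hasRepstringCovering_neg_iff (k := k) (z := z) hw (a := 𝔱) (ε := -1)
  simp only [HasRepstringCovering, neg_neg, Int.cast_neg, Int.cast_one, Int.natCast_modEq_iff,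
    ZMod.natCast_eq_neg_one_iff_dvd, ZMod.natCast_eq_one_iff_modEq] at h
  exact h.symm

/-- Let `k`, `𝔱`, `w` be positive integers and `z` a nonnegative
integer.  Then the following are equivalent: (1) there exist a covering system
`{r_j (mod m_j)}` and pairwise distinct primes `p_j`, each a primitive prime divisor of
`2^{m_j} − 1`, such that `k_2^{(z;t)}·2^{r_j} ≡ −1 (mod p_j)` for every positive `t ≡ 𝔱
(mod w)` and every `j`; (2) there exist a covering system `{r'_i (mod m'_i)}` and pairwise
distinct primes `p'_i`, each a primitive prime divisor of `2^{m'_i} − 1`, such that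
`k_2^{(z;t')}·2^{r'_i} ≡ 1 (mod p'_i)` for every positive `t' ≡ −𝔱 (mod w)` and every
`i`. -/
theorem stmt_19 (k 𝔱 w z : ℕ) (hk : 0 < k) (h𝔱 : 0 < 𝔱) (hw : 0 < w) :
    (∃ (τ : ℕ) (r m p : Fin τ → ℕ),
      (∀ j, 0 < m j) ∧
      (∀ n : ℤ, ∃ j, n ≡ (r j : ℤ) [ZMOD (m j : ℤ)]) ∧
      Function.Injective p ∧
      (∀ j, IsPrimitivePrimeDivisor (p j) (m j)) ∧
      (∀ t : ℕ, 0 < t → t ≡ 𝔱 [MOD w] → ∀ j,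
        p j ∣ repstring2 k z t * 2 ^ (r j) + 1)) ↔
    (∃ (τ' : ℕ) (r' m' p' : Fin τ' → ℕ),
      (∀ i, 0 < m' i) ∧
      (∀ n : ℤ, ∃ i, n ≡ (r' i : ℤ) [ZMOD (m' i : ℤ)]) ∧
      Function.Injective p' ∧
      (∀ i, IsPrimitivePrimeDivisor (p' i) (m' i)) ∧
      (∀ t' : ℕ, 0 < t' → (t' : ℤ) ≡ -(𝔱 : ℤ) [ZMOD (w : ℤ)] → ∀ i,
        repstring2 k z t' * 2 ^ (r' i) ≡ 1 [MOD p' i])) :=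
  stmt_19_general k 𝔱 w z hw
end
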